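/- arXiv:1009.0470 — 2 statements merged into one kernel-verified Lean document; each statement's English description precedes it below -/
import Mathlib

section
/- (Normalization estimate.) Let ε ∈ (0,1], M₀ > 0, α ∈ (0,1], C > 0, and let f₀ ∈ L¹ ∩ L²(ℝ³×ℝ³) be real-valued with ∫ f₀ dx dk = 1, ∫_{|k|>M₀/4} |f₀| dx dk ≤ C ε^{α}, and ‖f₀‖_{L¹(ℝ³×ℝ³)} ≤ C ε^{α+3/2} e^{M₀²/(16ε)}. Let f̃₀ be the Husimi transform of f₀ with parameter ε, assume f̃₀ ≥ 0 pointwise, and let χ_{M₀} = χ_{M₀}(|k|) be a monotone C^∞ cutoff with χ_{M₀} = 1 for |k| ≤ M₀/2 and χ_{M₀} = 0 for |k| ≥ M₀. Then there is a constant C' depending only on C, α, M₀ such that | 1 − ∫ χ_{M₀}(|k|) f̃₀(x,k) dx dk | ≤ C' ε^{α}. -/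
open MeasureTheory Real
open scoped ENNReal Convolution

set_option maxHeartbeats 2000000
set_option synthInstance.maxHeartbeats 400000

noncomputable section

abbrev E3 := EuclideanSpace ℝ (Fin 3)

lemma integrable_gauss3 {c : ℝ} (hc : 0 < c) :
    Integrable (fun x : E3 => Real.exp (-c * ‖x‖ ^ 2)) := by
  have h := (GaussianFourier.integrable_cexp_neg_mul_sq_norm_add (V := E3) (b := (c : ℂ))
      (by simpa using hc) 0 0).norm
  refine h.congr (Filter.Eventually.of_forall fun v => ?_)
  simp only [Complex.norm_exp]
  norm_num
  left
  norm_cast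

lemma integral_gauss3 {c : ℝ} (hc : 0 < c) :
    ∫ x : E3, Real.exp (-c * ‖x‖ ^ 2) = (π / c) ^ (3/2 : ℝ) := by
  rw [GaussianFourier.integral_rexp_neg_mul_sq_norm hc]
  norm_num [finrank_euclideanSpace_fin]

lemma gauss3_le_one {c : ℝ} (hc : 0 ≤ c) (x : E3) : Real.exp (-c * ‖x‖ ^ 2) ≤ 1 :=
  Real.exp_le_one_iff.mpr (by nlinarith [sq_nonneg ‖x‖])

instance : (volume : Measure (E3 × E3)).IsAddLeftInvariant := by
  rw [MeasureTheory.Measure.volume_eq_prod]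
  exact Measure.prod.instIsAddLeftInvariant

/-- Husimi transform with parameter ε. -/
def Husimi (ε : ℝ) (f : E3 × E3 → ℝ) (z : E3 × E3) : ℝ :=
  ((Real.pi * ε) ^ 3)⁻¹ *
    ∫ w : E3 × E3, Real.exp (-(‖z.1 - w.1‖ ^ 2 + ‖z.2 - w.2‖ ^ 2) / ε) * f w

/-- **Normalization estimate** (from the proof of Proposition 2.1): the defect of
normalization of the cutoff Husimi function is `O(ε^α)`, with a constant depending only on
`C`, `α`, `M₀`. -/
theorem normalization_estimate
    (C α M₀ : ℝ) (hC : 0 < C) (hα0 : 0 < α) (hα1 : α ≤ 1) (hM₀ : 0 < M₀) :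
    ∃ C' > (0:ℝ),
      ∀ ε : ℝ, ε ∈ Set.Ioc (0:ℝ) 1 →
      ∀ f₀ : E3 × E3 → ℝ,
        Integrable f₀ volume →
        MemLp f₀ 2 volume →
        (∫ z : E3 × E3, f₀ z) = 1 →
        (∫ z in {z : E3 × E3 | M₀ / 4 < ‖z.2‖}, |f₀ z|) ≤ C * ε ^ α →
        (∫ z : E3 × E3, |f₀ z|) ≤ C * ε ^ (α + 3/2) * Real.exp (M₀ ^ 2 / (16 * ε)) →
        -- the Husimi transform of f₀ is pointwise nonnegative
        (∀ z : E3 × E3, 0 ≤ Husimi ε f₀ z) →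
      ∀ χ : ℝ → ℝ,
        ContDiff ℝ (⊤ : ℕ∞) χ → Antitone χ →
        (∀ r : ℝ, r ≤ M₀ / 2 → χ r = 1) → (∀ r : ℝ, M₀ ≤ r → χ r = 0) →
        |1 - ∫ z : E3 × E3, χ ‖z.2‖ * Husimi ε f₀ z| ≤ C' * ε ^ α := by
  refine ⟨C * (1 + 2 ^ (3/2 : ℝ) * Real.exp (M₀ ^ 2 / 16)), by positivity, ?_⟩
  rintro ε ⟨hε0, hε1⟩ f₀ hf₀int _hf₀L2 hf₀mass hf₀tail hf₀L1 hHpos χ hχsm hχanti hχ1 hχ0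
  have hb : (0:ℝ) < ε⁻¹ := inv_pos.mpr hε0
  have hπε : (0:ℝ) < π * ε := by positivity
  set L : ℝ →L[ℝ] ℝ →L[ℝ] ℝ := ContinuousLinearMap.mul ℝ ℝ with hL
  set g1 : E3 → ℝ := fun x => Real.exp (-ε⁻¹ * ‖x‖ ^ 2) with hg1
  set g2 : E3 → ℝ := fun x => Real.exp (-(2⁻¹ : ℝ) * ‖x‖ ^ 2) with hg2
  set G : E3 × E3 → ℝ := fun u => g1 u.1 * g1 u.2 with hG
  set K : E3 × E3 → ℝ := fun u => g1 u.1 * g2 u.2 with hK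
  have hg1int : Integrable g1 := integrable_gauss3 hb
  have hg2int : Integrable g2 := integrable_gauss3 (by norm_num)
  have hGint : Integrable G := hg1int.mul_prod hg1int
  have hKint : Integrable K := hg1int.mul_prod hg2int
  have hg1val : ∫ x, g1 x = (π * ε) ^ (3/2 : ℝ) := by
    rw [hg1, integral_gauss3 hb, div_inv_eq_mul]
  have hg2val : ∫ x, g2 x = (2 * π) ^ (3/2 : ℝ) := by
    rw [hg2, integral_gauss3 (by norm_num), show π / (2⁻¹:ℝ) = 2 * π by ring]
  have hGval : ∫ u, G u = (π * ε) ^ 3 := by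
    rw [hG, MeasureTheory.Measure.volume_eq_prod, integral_prod_mul, hg1val, ← Real.rpow_add hπε]
    rw [show (3/2 : ℝ) + 3/2 = ((3:ℕ) : ℝ) by norm_num, Real.rpow_natCast]
  have hKval : ∫ u, K u = (π * ε) ^ (3/2 : ℝ) * (2 * π) ^ (3/2 : ℝ) := by
    rw [hK, MeasureTheory.Measure.volume_eq_prod, integral_prod_mul, hg1val, hg2val]
  -- kernel facts
  have hg1nn : ∀ x, 0 ≤ g1 x := fun x => (Real.exp_pos _).le
  have hg2nn : ∀ x, 0 ≤ g2 x := fun x => (Real.exp_pos _).le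
  have hg1le : ∀ x, g1 x ≤ 1 := fun x => gauss3_le_one hb.le x
  have hg2le : ∀ x, g2 x ≤ 1 := fun x => gauss3_le_one (by norm_num) x
  have hGnn : ∀ u, 0 ≤ G u := fun u => mul_nonneg (hg1nn _) (hg1nn _)
  have hKnn : ∀ u, 0 ≤ K u := fun u => mul_nonneg (hg1nn _) (hg2nn _)
  have hGle : ∀ u, ‖G u‖ ≤ 1 := by
    intro u
    rw [Real.norm_of_nonneg (hGnn u)]
    calc G u = g1 u.1 * g1 u.2 := rfl
      _ ≤ 1 := mul_le_one₀ (hg1le u.1) (hg1nn u.2) (hg1le u.2)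
  have hKle : ∀ u, ‖K u‖ ≤ 1 := by
    intro u
    rw [Real.norm_of_nonneg (hKnn u)]
    calc K u = g1 u.1 * g2 u.2 := rfl
      _ ≤ 1 := mul_le_one₀ (hg1le u.1) (hg2nn u.2) (hg2le u.2)
  have hGcont : Continuous G := by
    rw [hG, hg1]; fun_prop
  have hKcont : Continuous K := by
    rw [hK, hg1, hg2]; fun_prop
  -- Husimi as convolution
  have hGeq : ∀ z w : E3 × E3,
      Real.exp (-(‖z.1 - w.1‖ ^ 2 + ‖z.2 - w.2‖ ^ 2) / ε) = G (z - w) := by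
    intro z w
    rw [hG]
    simp only [hg1, Prod.fst_sub, Prod.snd_sub, ← Real.exp_add]
    congr 1
    field_simp
    ring
  have hHdef : ∀ z, Husimi ε f₀ z = ((π * ε) ^ 3)⁻¹ * (f₀ ⋆[L, volume] G) z := by
    intro z
    rw [Husimi, convolution_def]
    congr 1
    refine integral_congr_ae (Filter.Eventually.of_forall fun w => ?_)
    simp only [hL, ContinuousLinearMap.mul_apply']
    rw [hGeq z w, mul_comm]
  -- integrability of convolutions
  have convInt : ∀ (φ : E3 × E3 → ℝ), Integrable φ → ∀ (K' : E3 × E3 → ℝ), Integrable K' →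
      Integrable (φ ⋆[L, volume] K') := by
    intro φ hφ K' hK'
    exact (hφ.convolution_integrand L hK').integral_prod_left
  have convAt : ∀ (φ : E3 × E3 → ℝ), Integrable φ → ∀ (K' : E3 × E3 → ℝ), Continuous K' →
      (∀ u, ‖K' u‖ ≤ 1) → ∀ z : E3 × E3, Integrable (fun w => φ w * K' (z - w)) := by
    intro φ hφ K' hKc hKb z
    have h := hφ.bdd_mul (f := fun w => K' (z - w))
      ((hKc.comp (continuous_const.sub continuous_id)).aestronglyMeasurable)
      (c := 1) (Filter.Eventually.of_forall fun w => hKb _)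
    exact h.congr (Filter.Eventually.of_forall fun w => mul_comm _ _)
  have hconvint : Integrable (f₀ ⋆[L, volume] G) := convInt f₀ hf₀int G hGint
  have hHint : Integrable (Husimi ε f₀) := by
    have h : Husimi ε f₀ = fun z => ((π * ε) ^ 3)⁻¹ * (f₀ ⋆[L, volume] G) z := funext hHdef
    rw [h]
    exact hconvint.const_mul _
  have hπε3 : ((π * ε) ^ 3 : ℝ) ≠ 0 := by positivity
  have hHmass : ∫ z, Husimi ε f₀ z = 1 := by
    simp only [hHdef]
    rw [integral_const_mul, integral_convolution L hf₀int hGint, hf₀mass, hGval]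
    simp only [hL, ContinuousLinearMap.mul_apply', one_mul]
    exact inv_mul_cancel₀ hπε3
  -- χ bounds
  have hχ01 : ∀ r : ℝ, 0 ≤ χ r ∧ χ r ≤ 1 := by
    intro r
    constructor
    · rcases le_total r M₀ with h | h
      · calc (0:ℝ) = χ M₀ := (hχ0 M₀ le_rfl).symm
          _ ≤ χ r := hχanti h
      · rw [hχ0 r h]
    · rcases le_total r (M₀ / 2) with h | h
      · rw [hχ1 r h]
      · calc χ r ≤ χ (M₀ / 2) := hχanti h
          _ = 1 := hχ1 _ le_rfl
  have hχHint : Integrable (fun z : E3 × E3 => χ ‖z.2‖ * Husimi ε f₀ z) := by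
    refine hHint.bdd_mul (c := 1) ?_ (Filter.Eventually.of_forall fun z => ?_)
    · exact (hχsm.continuous.comp (continuous_norm.comp continuous_snd)).aestronglyMeasurable
    · rw [Real.norm_of_nonneg (hχ01 _).1]; exact (hχ01 _).2
  -- the defect as an integral
  have hdefect : 1 - (∫ z : E3 × E3, χ ‖z.2‖ * Husimi ε f₀ z)
      = ∫ z : E3 × E3, (1 - χ ‖z.2‖) * Husimi ε f₀ z := by
    have h : (∫ z : E3 × E3, (1 - χ ‖z.2‖) * Husimi ε f₀ z)
        = (∫ z : E3 × E3, Husimi ε f₀ z) - ∫ z : E3 × E3, χ ‖z.2‖ * Husimi ε f₀ z := by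
      rw [← integral_sub hHint hχHint]
      congr 1
      funext z
      ring
    rw [h, hHmass]
  have hdefnn : 0 ≤ ∫ z : E3 × E3, (1 - χ ‖z.2‖) * Husimi ε f₀ z := by
    refine integral_nonneg fun z => mul_nonneg ?_ (hHpos z)
    linarith [(hχ01 ‖z.2‖).2]
  -- the comparison functions
  set A : Set (E3 × E3) := {z : E3 × E3 | M₀ / 4 < ‖z.2‖} with hA
  have hAmeas : MeasurableSet A :=
    measurableSet_lt measurable_const (continuous_norm.comp continuous_snd).measurable
  set φ₁ : E3 × E3 → ℝ := A.indicator (fun w => |f₀ w|) with hφ₁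
  set φ₂ : E3 × E3 → ℝ := Aᶜ.indicator (fun w => |f₀ w|) with hφ₂
  have hφ₁int : Integrable φ₁ := hf₀int.abs.indicator hAmeas
  have hφ₂int : Integrable φ₂ := hf₀int.abs.indicator hAmeas.compl
  have hφ₁nn : ∀ w, 0 ≤ φ₁ w := fun w => Set.indicator_nonneg (fun x _ => abs_nonneg _) w
  have hφ₂nn : ∀ w, 0 ≤ φ₂ w := fun w => Set.indicator_nonneg (fun x _ => abs_nonneg _) w
  set d₀ : ℝ := Real.exp (M₀ ^ 2 / 16 - M₀ ^ 2 / (16 * ε)) with hd₀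
  have hd₀nn : 0 ≤ d₀ := (Real.exp_pos _).le
  set R : E3 × E3 → ℝ := fun z =>
    ((π * ε) ^ 3)⁻¹ * ((φ₁ ⋆[L, volume] G) z + d₀ * (φ₂ ⋆[L, volume] K) z) with hR
  have hint1 := convInt φ₁ hφ₁int G hGint
  have hint2 := convInt φ₂ hφ₂int K hKint
  have hRint : Integrable R := (hint1.add (hint2.const_mul d₀)).const_mul _
  -- pointwise bound
  have hpt : ∀ z, (1 - χ ‖z.2‖) * Husimi ε f₀ z ≤ R z := by
    intro z
    have hconv1nn : 0 ≤ (φ₁ ⋆[L, volume] G) z := by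
      rw [convolution_def]
      refine integral_nonneg fun w => ?_
      simp only [hL, ContinuousLinearMap.mul_apply']
      exact mul_nonneg (hφ₁nn w) (hGnn _)
    have hconv2nn : 0 ≤ (φ₂ ⋆[L, volume] K) z := by
      rw [convolution_def]
      refine integral_nonneg fun w => ?_
      simp only [hL, ContinuousLinearMap.mul_apply']
      exact mul_nonneg (hφ₂nn w) (hKnn _)
    by_cases hz : ‖z.2‖ ≤ M₀ / 2
    · rw [hχ1 _ hz, sub_self, zero_mul, hR]
      exact mul_nonneg (by positivity) (add_nonneg hconv1nn (mul_nonneg hd₀nn hconv2nn))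
    · push_neg at hz
      have step1 : (1 - χ ‖z.2‖) * Husimi ε f₀ z ≤ Husimi ε f₀ z := by
        nlinarith [(hχ01 ‖z.2‖).1, (hχ01 ‖z.2‖).2, hHpos z]
      refine step1.trans ?_
      rw [hHdef z, hR]
      refine mul_le_mul_of_nonneg_left ?_ (by positivity)
      rw [convolution_def, convolution_def, convolution_def]
      simp only [hL, ContinuousLinearMap.mul_apply']
      have h1 := convAt φ₁ hφ₁int G hGcont hGle z
      have h2 := (convAt φ₂ hφ₂int K hKcont hKle z).const_mul d₀
      rw [← integral_const_mul d₀ _, ← integral_add h1 h2]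
      refine integral_mono (convAt f₀ hf₀int G hGcont hGle z) (h1.add h2) fun w => ?_
      have hsplit : φ₁ w + φ₂ w = |f₀ w| := by
        rw [hφ₁, hφ₂]
        by_cases hw : w ∈ A
        · rw [Set.indicator_of_mem hw, Set.indicator_of_notMem (Set.notMem_compl_iff.mpr hw)]
          ring
        · rw [Set.indicator_of_notMem hw, Set.indicator_of_mem (Set.mem_compl hw)]
          ring
      have h0 : f₀ w * G (z - w) ≤ |f₀ w| * G (z - w) :=
        mul_le_mul_of_nonneg_right (le_abs_self _) (hGnn _)
      refine h0.trans ?_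
      rw [← hsplit, add_mul]
      have hmain : φ₂ w * G (z - w) ≤ d₀ * (φ₂ w * K (z - w)) := by
        by_cases hw : w ∈ A
        · rw [hφ₂, Set.indicator_of_notMem (Set.notMem_compl_iff.mpr hw)]
          simp
        · have hw2 : ‖w.2‖ ≤ M₀ / 4 := le_of_not_gt (by simpa [hA] using hw)
          have hr : M₀ / 4 ≤ ‖z.2 - w.2‖ := by
            have := norm_sub_norm_le z.2 w.2
            linarith
          have hfac : g1 (z.2 - w.2) ≤ d₀ * g2 (z.2 - w.2) := by
            rw [hg1, hg2, hd₀, ← Real.exp_add, Real.exp_le_exp]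
            set r := ‖z.2 - w.2‖ with hrr
            have hr2 : (M₀ / 4) ^ 2 ≤ r ^ 2 := by nlinarith
            have h1ε : 1 ≤ ε⁻¹ := (one_le_inv₀ hε0).mpr hε1
            have hM16 : M₀ ^ 2 / (16 * ε) = (M₀ / 4) ^ 2 * ε⁻¹ := by
              rw [show (M₀ / 4) ^ 2 = M₀ ^ 2 / 16 by ring, div_mul_eq_div_div, div_eq_mul_inv]
            have hM16' : M₀ ^ 2 / 16 = (M₀ / 4) ^ 2 := by ring
            rw [hM16, hM16']
            nlinarith [mul_nonneg (sub_nonneg.mpr h1ε) (sub_nonneg.mpr hr2), sq_nonneg r]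
          have hkey : G (z - w) ≤ d₀ * K (z - w) := by
            have : G (z - w) = g1 (z.1 - w.1) * g1 (z.2 - w.2) := by
              rw [hG]; simp [Prod.fst_sub, Prod.snd_sub]
            rw [this]
            have hK' : K (z - w) = g1 (z.1 - w.1) * g2 (z.2 - w.2) := by
              rw [hK]; simp [Prod.fst_sub, Prod.snd_sub]
            rw [hK']
            calc g1 (z.1 - w.1) * g1 (z.2 - w.2)
                ≤ g1 (z.1 - w.1) * (d₀ * g2 (z.2 - w.2)) :=
                  mul_le_mul_of_nonneg_left hfac (hg1nn _)
              _ = d₀ * (g1 (z.1 - w.1) * g2 (z.2 - w.2)) := by ring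
          calc φ₂ w * G (z - w) ≤ φ₂ w * (d₀ * K (z - w)) :=
                mul_le_mul_of_nonneg_left hkey (hφ₂nn w)
            _ = d₀ * (φ₂ w * K (z - w)) := by ring
      linarith
  -- bounds on the masses
  have hφ₁val : ∫ w, φ₁ w ≤ C * ε ^ α := by
    rw [hφ₁, integral_indicator hAmeas]
    exact hf₀tail
  have hφ₂nn' : 0 ≤ ∫ w, φ₂ w := integral_nonneg hφ₂nn
  have hφ₂val : ∫ w, φ₂ w ≤ C * ε ^ (α + 3/2) * Real.exp (M₀ ^ 2 / (16 * ε)) := by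
    rw [hφ₂, integral_indicator hAmeas.compl]
    exact (setIntegral_le_integral hf₀int.abs
      (Filter.Eventually.of_forall fun w => abs_nonneg _)).trans hf₀L1
  -- integral of R
  have hI1 : ∫ z, (φ₁ ⋆[L, volume] G) z = (∫ w, φ₁ w) * (π * ε) ^ 3 := by
    rw [integral_convolution L hφ₁int hGint, hGval]
    simp [hL]
  have hI2 : ∫ z, (φ₂ ⋆[L, volume] K) z
      = (∫ w, φ₂ w) * ((π * ε) ^ (3/2 : ℝ) * (2 * π) ^ (3/2 : ℝ)) := by
    rw [integral_convolution L hφ₂int hKint, hKval]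
    simp [hL]
  have key : (π * ε) ^ (3/2 : ℝ) * (2 * π) ^ (3/2 : ℝ) * ε ^ (3/2 : ℝ)
      = 2 ^ (3/2 : ℝ) * (π * ε) ^ 3 := by
    rw [← Real.mul_rpow (by positivity) (by positivity),
      ← Real.mul_rpow (by positivity) hε0.le,
      show (π * ε * (2 * π) * ε) = 2 * (π * ε) ^ 2 by ring,
      Real.mul_rpow (by norm_num) (by positivity)]
    congr 1
    rw [← Real.rpow_natCast (π * ε) 2, ← Real.rpow_natCast (π * ε) 3,
      ← Real.rpow_mul hπε.le]
    norm_num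
  have hRval : ∫ z, R z ≤ C * (1 + 2 ^ (3/2 : ℝ) * Real.exp (M₀ ^ 2 / 16)) * ε ^ α := by
    have hIR : ∫ z, R z = ((π * ε) ^ 3)⁻¹ * ((∫ w, φ₁ w) * (π * ε) ^ 3
        + d₀ * ((∫ w, φ₂ w) * ((π * ε) ^ (3/2 : ℝ) * (2 * π) ^ (3/2 : ℝ)))) := by
      rw [hR]
      rw [integral_const_mul, integral_add hint1 (hint2.const_mul d₀), integral_const_mul d₀ _,
        hI1, hI2]
    rw [hIR]
    have step : ((π * ε) ^ 3)⁻¹ * ((∫ w, φ₁ w) * (π * ε) ^ 3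
        + d₀ * ((∫ w, φ₂ w) * ((π * ε) ^ (3/2 : ℝ) * (2 * π) ^ (3/2 : ℝ))))
        ≤ ((π * ε) ^ 3)⁻¹ * ((C * ε ^ α) * (π * ε) ^ 3
        + d₀ * ((C * ε ^ (α + 3/2) * Real.exp (M₀ ^ 2 / (16 * ε)))
            * ((π * ε) ^ (3/2 : ℝ) * (2 * π) ^ (3/2 : ℝ)))) := by
      gcongr
    refine step.trans (le_of_eq ?_)
    have e1 : d₀ * Real.exp (M₀ ^ 2 / (16 * ε)) = Real.exp (M₀ ^ 2 / 16) := by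
      rw [hd₀, ← Real.exp_add]
      ring_nf
    have e2 : ε ^ (α + 3/2 : ℝ) = ε ^ α * ε ^ (3/2 : ℝ) := Real.rpow_add hε0 _ _
    rw [e2]
    have hX : ((π * ε) ^ 3)⁻¹ * (π * ε) ^ 3 = 1 := inv_mul_cancel₀ hπε3
    linear_combination (C * ε ^ α + C * ε ^ α * Real.exp (M₀ ^ 2 / 16) * 2 ^ (3/2 : ℝ)) * hX
      + (((π * ε) ^ 3)⁻¹ * C * ε ^ α * ((π * ε) ^ (3/2 : ℝ) * (2 * π) ^ (3/2 : ℝ)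
          * ε ^ (3/2 : ℝ))) * e1
      + (((π * ε) ^ 3)⁻¹ * C * ε ^ α * Real.exp (M₀ ^ 2 / 16)) * key
  rw [hdefect, abs_of_nonneg hdefnn]
  calc (∫ z : E3 × E3, (1 - χ ‖z.2‖) * Husimi ε f₀ z) ≤ ∫ z, R z := by
        refine integral_mono_of_nonneg (Filter.Eventually.of_forall fun z => ?_) hRint
          (Filter.Eventually.of_forall hpt)
        exact mul_nonneg (by linarith [(hχ01 ‖z.2‖).2]) (hHpos z)
    _ ≤ C * (1 + 2 ^ (3/2 : ℝ) * Real.exp (M₀ ^ 2 / 16)) * ε ^ α := hRval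

end
end

section
/- (Exponential Taylor inequality.) For every ε > 0 and all p, q, S ∈ ℝ³: | e^{-ε|p|²/4} e^{-ε|q|²/4} ( 1 − e^{-ε|S|²/2} e^{ε (p·S)/2} ) | ≤ (ε/2) ( |S|² + |p| |S| ). -/
open Real

noncomputable section

/-!
Writing `a = -ε(|p|² + |q|²)/4` and `x = ε(p·S − |S|²)/2`, the quantity is `e^a − e^(a+x)`, where
`a + x ≤ 0` as well because `p·S − |S|² ≤ |p|²/4`. On `(-∞, 0]` the exponential is
1-Lipschitz, so the quantity is at most `|x| ≤ (ε/2)(|p||S| + |S|²)` by Cauchy–Schwarz.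
-/

theorem Real.abs_exp_sub_exp_le_of_nonpos {a b : ℝ} (ha : a ≤ 0) (hb : b ≤ 0) :
    |exp a - exp b| ≤ |a - b| := by
  wlog hba : b ≤ a generalizing a b
  · rw [abs_sub_comm, abs_sub_comm a]
    exact this hb ha (le_of_not_ge hba)
  have hexp_le : exp b ≤ exp a := exp_le_exp.mpr hba
  have hexp_a : exp a ≤ 1 := exp_le_one_iff.mpr ha
  have htaylor : 1 - exp (b - a) ≤ a - b := by linarith [add_one_le_exp (b - a)]
  have hexp_b : exp b = exp a * exp (b - a) := by rw [← exp_add, add_sub_cancel]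
  rw [abs_of_nonneg (sub_nonneg.mpr hexp_le), abs_of_nonneg (sub_nonneg.mpr hba)]
  calc exp a - exp b = exp a * (1 - exp (b - a)) := by rw [hexp_b]; ring
    _ ≤ 1 * (a - b) := by
      gcongr
      linarith [exp_le_one_iff.mpr (by linarith : b - a ≤ 0)]
    _ = a - b := one_mul _

section InnerProductSpace

variable {F : Type*} [NormedAddCommGroup F] [InnerProductSpace ℝ F]

theorem real_inner_sub_norm_sq_le (p S : F) : inner ℝ p S - ‖S‖ ^ 2 ≤ ‖p‖ ^ 2 / 4 := by
  nlinarith [real_inner_le_norm p S, sq_nonneg (‖p‖ - 2 * ‖S‖)]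

theorem abs_real_inner_sub_norm_sq_le (p S : F) :
    |inner ℝ p S - ‖S‖ ^ 2| ≤ ‖S‖ ^ 2 + ‖p‖ * ‖S‖ :=
  calc |inner ℝ p S - ‖S‖ ^ 2| ≤ |inner ℝ p S| + |‖S‖ ^ 2| := abs_sub _ _
    _ ≤ ‖p‖ * ‖S‖ + ‖S‖ ^ 2 := by
      rw [abs_of_nonneg (sq_nonneg ‖S‖)]
      gcongr
      exact abs_real_inner_le_norm p S
    _ = ‖S‖ ^ 2 + ‖p‖ * ‖S‖ := add_comm _ _

end InnerProductSpace

/-- **Exponential Taylor inequality** (equations (6.15)–(6.16)): for all `ε > 0` and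
`p, q, S ∈ ℝ³`,
`|e^{-ε|p|²/4} e^{-ε|q|²/4} (1 − e^{-ε|S|²/2} e^{ε p·S/2})| ≤ (ε/2)(|S|² + |p||S|)`. -/
theorem exp_taylor_inequality (ε : ℝ) (hε : 0 < ε) (p q S : E3) :
    |Real.exp (-(ε * ‖p‖ ^ 2) / 4) * Real.exp (-(ε * ‖q‖ ^ 2) / 4) *
        (1 - Real.exp (-(ε * ‖S‖ ^ 2) / 2) * Real.exp (ε * (inner ℝ p S : ℝ) / 2))| ≤
      ε / 2 * (‖S‖ ^ 2 + ‖p‖ * ‖S‖) := by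
  set a := -(ε * (‖p‖ ^ 2 + ‖q‖ ^ 2)) / 4 with ha_def
  set x := ε / 2 * (inner ℝ p S - ‖S‖ ^ 2) with hx_def
  have ha : a ≤ 0 := by
    have : 0 ≤ ε * (‖p‖ ^ 2 + ‖q‖ ^ 2) := by positivity
    linarith [ha_def]
  have hax : a + x ≤ 0 := by
    have hx_le := mul_le_mul_of_nonneg_left (real_inner_sub_norm_sq_le p S) (half_pos hε).le
    have hq : 0 ≤ ε * ‖q‖ ^ 2 := by positivity
    linarith [ha_def, hx_def]
  have hx : |x| ≤ ε / 2 * (‖S‖ ^ 2 + ‖p‖ * ‖S‖) := by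
    rw [abs_mul, abs_of_pos (half_pos hε)]
    exact mul_le_mul_of_nonneg_left (abs_real_inner_sub_norm_sq_le p S) (half_pos hε).le
  have hrewrite : Real.exp (-(ε * ‖p‖ ^ 2) / 4) * Real.exp (-(ε * ‖q‖ ^ 2) / 4) *
        (1 - Real.exp (-(ε * ‖S‖ ^ 2) / 2) * Real.exp (ε * (inner ℝ p S : ℝ) / 2)) =
      exp a - exp (a + x) := by
    rw [mul_one_sub, ← exp_add, ← exp_add, ← exp_add]
    congr 2 <;> ring
  calc _ = |exp a - exp (a + x)| := by rw [hrewrite]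
    _ ≤ |a - (a + x)| := abs_exp_sub_exp_le_of_nonpos ha hax
    _ = |x| := by rw [sub_add_cancel_left, abs_neg]
    _ ≤ _ := hx

end
end
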